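/- Under the assumptions of the hidden conformal symmetry setup: if F(r_±) = λ T_± A_±/(r_+ - r_-) for a nonzero constant λ (with T_±, A_± > 0, r_- < r_+), and there exists a monotone conformal coordinate ρ with F(r)(r-r_+)(r-r_-)ρ'(r) = (ρ-ρ_+)(ρ-ρ_-), then T_+ A_+ = T_- A_-. -/

import Mathlib

/-!
At a horizon `r = a` (with `b` the other horizon) the conformal equation
`F r (r - a)(r - b) ρ' r = (ρ r - ρ a)(ρ r - ρ b)` degenerates to `0 = 0`. Dividing it by `r - a`
and letting `r → a⁺`, the right-hand side becomes `ρ'(a)(ρ a - ρ b)`, so `ρ'` has a limit at `a`,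
which must be `ρ'(a)`. Hence `F a (a - b) ρ'(a) = ρ'(a)(ρ a - ρ b)`, and `ρ'(a) ≠ 0` gives
`F a (a - b) = ρ a - ρ b`. Adding the identities at `r₊` and `r₋` yields `F r₊ = F r₋`, which by
the formula for `F(r_±)` is `T₊A₊ = T₋A₋`.
-/

open Filter Set Topology

theorem deriv_eq_of_tendsto_deriv_nhdsGT {E : Type*} [NormedAddCommGroup E] [NormedSpace ℝ E]
    {f : ℝ → E} {a : ℝ} {e : E} (hfa : DifferentiableAt ℝ f a)
    (hf : ∀ᶠ x in 𝓝[>] a, DifferentiableAt ℝ f x)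
    (he : Tendsto (deriv f) (𝓝[>] a) (𝓝 e)) : deriv f a = e :=
  (uniqueDiffWithinAt_Ici a).eq_deriv _ hfa.hasDerivAt.hasDerivWithinAt <|
    hasDerivWithinAt_Ici_of_tendsto_deriv (s := {x | DifferentiableAt ℝ f x})
      (fun _ hx => hx.differentiableWithinAt) hfa.continuousAt.continuousWithinAt hf he

theorem mul_sub_eq_sub_of_conformal_ode {F ρ : ℝ → ℝ} {a b : ℝ} (hab : a ≠ b) (hFa : F a ≠ 0)
    (hF : ContinuousWithinAt F (Ioi a) a) (hρa : DifferentiableAt ℝ ρ a) (hρ'a : deriv ρ a ≠ 0)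
    (hρ : ∀ᶠ r in 𝓝[>] a, DifferentiableAt ℝ ρ r)
    (hode : ∀ᶠ r in 𝓝[>] a,
      F r * (r - a) * (r - b) * deriv ρ r = (ρ r - ρ a) * (ρ r - ρ b)) :
    F a * (a - b) = ρ a - ρ b := by
  have hρc : Tendsto ρ (𝓝[>] a) (𝓝 (ρ a)) := hρa.continuousAt.continuousWithinAt
  have hnum : Tendsto (fun r => slope ρ a r * (ρ r - ρ b)) (𝓝[>] a)
      (𝓝 (deriv ρ a * (ρ a - ρ b))) :=
    (hρa.hasDerivAt.tendsto_slope.mono_left (nhdsGT_le_nhdsNE a)).mul (hρc.sub_const _)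
  have hden : Tendsto (fun r => F r * (r - b)) (𝓝[>] a) (𝓝 (F a * (a - b))) :=
    hF.tendsto.mul ((continuous_id.sub continuous_const).continuousWithinAt.tendsto)
  have hden0 : F a * (a - b) ≠ 0 := mul_ne_zero hFa (sub_ne_zero.2 hab)
  have hlim : Tendsto (deriv ρ) (𝓝[>] a) (𝓝 (deriv ρ a * (ρ a - ρ b) / (F a * (a - b)))) := by
    refine (hnum.div hden hden0).congr' ?_
    filter_upwards [hode, hden.eventually_ne hden0, self_mem_nhdsWithin] with r hr hr0 hra
    have hra' : r - a ≠ 0 := sub_ne_zero.2 (ne_of_gt hra)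
    change slope ρ a r * (ρ r - ρ b) / (F r * (r - b)) = deriv ρ r
    rw [slope_def_field, div_eq_iff hr0]
    field_simp
    linear_combination hr.symm
  have hρ'a_eq := deriv_eq_of_tendsto_deriv_nhdsGT hρa hρ hlim
  rw [eq_div_iff hden0] at hρ'a_eq
  exact mul_left_cancel₀ hρ'a (by linear_combination hρ'a_eq)

theorem stmt_17_general (F : ℝ → ℝ) (rm rp Tp Tm Ap Am lam : ℝ) (hr : rm < rp)
    (hlam : lam ≠ 0)
    (hFp : F rp = lam * Tp * Ap / (rp - rm))
    (hFm : F rm = lam * Tm * Am / (rp - rm))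
    (hFcont : ContinuousOn F (Set.Ici rm))
    (hFpos : ∀ r ∈ Set.Ici rm, 0 < F r)
    (hρ : ∃ ρ : ℝ → ℝ, (∀ r ∈ Set.Ici rm, DifferentiableAt ℝ ρ r)
      ∧ StrictMonoOn ρ (Set.Ici rm)
      ∧ 0 < deriv ρ rp ∧ 0 < deriv ρ rm
      ∧ ∀ r ∈ Set.Ici rm,
          F r * (r - rp) * (r - rm) * deriv ρ r
            = (ρ r - ρ rp) * (ρ r - ρ rm)) :
    Tp * Ap = Tm * Am := by
  obtain ⟨ρ, hdiff, -, hdp, hdm, hode⟩ := hρ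
  have hrm : rm ∈ Ici rm := self_mem_Ici
  have hrp : rp ∈ Ici rm := hr.le
  have hnear : ∀ a ∈ Ici rm, ∀ᶠ r in 𝓝[>] a, r ∈ Ici rm := fun a ha =>
    eventually_nhdsWithin_of_forall fun _ hra => mem_Ici.2 (ha.trans (le_of_lt hra))
  have hFa : ∀ a ∈ Ici rm, ContinuousWithinAt F (Ioi a) a := fun a ha =>
    (hFcont a ha).mono (Ioi_subset_Ici ha)
  have hplus : F rp * (rp - rm) = ρ rp - ρ rm :=
    mul_sub_eq_sub_of_conformal_ode hr.ne' (hFpos rp hrp).ne' (hFa rp hrp) (hdiff rp hrp)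
      hdp.ne' ((hnear rp hrp).mono hdiff) ((hnear rp hrp).mono hode)
  have hminus : F rm * (rm - rp) = ρ rm - ρ rp :=
    mul_sub_eq_sub_of_conformal_ode hr.ne (hFpos rm hrm).ne' (hFa rm hrm) (hdiff rm hrm)
      hdm.ne' ((hnear rm hrm).mono hdiff)
      ((hnear rm hrm).mono fun r hr' => by linear_combination hode r hr')
  have hrne : rp - rm ≠ 0 := sub_ne_zero.2 hr.ne'
  have hF : F rp = F rm := mul_right_cancel₀ hrne (by linear_combination hplus + hminus)
  rw [hFp, hFm, div_left_inj' hrne, mul_assoc, mul_assoc] at hF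
  exact mul_left_cancel₀ hlam hF

/-- T₊A₊ = T₋A₋ is a necessary condition for the existence of the hidden
conformal symmetry: given F(r_±) = λT_±A_±/(r₊-r₋) and a monotone conformal
coordinate ρ solving F(r)(r-r₊)(r-r₋)ρ' = (ρ-ρ₊)(ρ-ρ₋), one has T₊A₊ = T₋A₋. -/
theorem stmt_17 (F : ℝ → ℝ) (rm rp Tp Tm Ap Am lam : ℝ) (hr : rm < rp)
    (hTp : 0 < Tp) (hTm : 0 < Tm) (hAp : 0 < Ap) (hAm : 0 < Am)
    (hlam : lam ≠ 0)
    (hFp : F rp = lam * Tp * Ap / (rp - rm))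
    (hFm : F rm = lam * Tm * Am / (rp - rm))
    (hFcont : ContinuousOn F (Set.Ici rm))
    (hFpos : ∀ r ∈ Set.Ici rm, 0 < F r)
    (hρ : ∃ ρ : ℝ → ℝ, (∀ r ∈ Set.Ici rm, DifferentiableAt ℝ ρ r)
      ∧ StrictMonoOn ρ (Set.Ici rm)
      ∧ 0 < deriv ρ rp ∧ 0 < deriv ρ rm
      ∧ ∀ r ∈ Set.Ici rm,
          F r * (r - rp) * (r - rm) * deriv ρ r
            = (ρ r - ρ rp) * (ρ r - ρ rm)) :
    Tp * Ap = Tm * Am :=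
  stmt_17_general F rm rp Tp Tm Ap Am lam hr hlam hFp hFm hFcont hFpos hρ
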